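/- Let B = (b_1, …, b_n) ∈ ℝ^{m×n} be a basis, let η ≥ 1, and let 1 ≤ d < n. If B_{[1,d]} is η^{d−1}-HSVP-reduced, B_{[d+1,n]} is η^{n−d−1}-HSVP-reduced, and ‖b_1‖ ≤ η^{2d}·‖b*_{d+1}‖, then B is η^{n−1}-HSVP-reduced, i.e., ‖b_1‖ ≤ η^{n−1}·vol(L(B))^{1/n}. -/

import Mathlib

/-! The volume of a lattice is the product `∏ ‖b_i*‖` of its Gram–Schmidt norms (the Gram
matrix is `μ · diag ‖b_i*‖² · μᵀ` with `μ` unitriangular), and the Gram–Schmidt vectors of the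
projected block `B_{[d+1,n]}` are `b_{d+1}*, …, b_n*`, so
`vol(L(B)) = vol(L(B_{[1,d]})) · vol(L(B_{[d+1,n]}))`. Raise the first hypothesis to the power
`d`, the last one to the power `n - d`, and bound `‖b_{d+1}*‖^{n-d}` by the second
(`b_{d+1}*` is the first vector of `B_{[d+1,n]}`). Multiplying gives
`‖b_1‖ⁿ ≤ η^{(d-1)d + 2d(n-d) + (n-d-1)(n-d)} vol(L(B)) = η^{(n-1)n} vol(L(B))`. -/

noncomputable section

/-- Euclidean space `ℝ^m`. -/
abbrev Euc (m : ℕ) : Type := EuclideanSpace ℝ (Fin m)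

variable {m : ℕ}

/-- `projGS B s` is the orthogonal projection `π_{s+1}` onto the subspace orthogonal to
`b_1, …, b_s` (0-based: orthogonal to `B 0, …, B (s-1)`). -/
def projGS (B : ℕ → Euc m) (s : ℕ) (x : Euc m) : Euc m :=
  (Submodule.orthogonalProjectionOnto ((Submodule.span ℝ (B '' Set.Iio s))ᗮ) x : Euc m)

/-- The Gram–Schmidt vector `b*_{i+1}` (0-based index `i`). -/
def gsoVec (B : ℕ → Euc m) (i : ℕ) : Euc m := projGS B i (B i)

/-- The projected block `B_{[s+1, s+ℓ]}` (0-based start `s`; the length is supplied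
separately to the predicates below). -/
def block (B : ℕ → Euc m) (s : ℕ) : ℕ → Euc m := fun t => projGS B s (B (s + t))

/-- Gram matrix of the first `ℓ` vectors. -/
def gram (B : ℕ → Euc m) (ℓ : ℕ) : Matrix (Fin ℓ) (Fin ℓ) ℝ :=
  Matrix.of fun i j => (inner ℝ (B i) (B j) : ℝ)

/-- `vol(L(B)) = det(BᵀB)^{1/2}` for the first `ℓ` vectors. -/
def volB (B : ℕ → Euc m) (ℓ : ℕ) : ℝ := Real.sqrt (gram B ℓ).det

/-- The lattice generated by the first `ℓ` vectors. -/
def latticeSpan (B : ℕ → Euc m) (ℓ : ℕ) : Submodule ℤ (Euc m) :=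
  Submodule.span ℤ (B '' Set.Iio ℓ)

/-- `λ₁(L)`: the minimum norm of a nonzero lattice vector. -/
def lambda1 (L : Submodule ℤ (Euc m)) : ℝ :=
  sInf {r : ℝ | ∃ x ∈ L, x ≠ 0 ∧ ‖x‖ = r}

/-- `B` (of rank `ℓ`) is `δ`-SVP-reduced. -/
def SVPReduced (δ : ℝ) (B : ℕ → Euc m) (ℓ : ℕ) : Prop :=
  ‖B 0‖ ≤ δ * lambda1 (latticeSpan B ℓ)

/-- `B` (of rank `ℓ`) is `δ`-HSVP-reduced. -/
def HSVPReduced (δ : ℝ) (B : ℕ → Euc m) (ℓ : ℕ) : Prop :=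
  ‖B 0‖ ≤ δ * volB B ℓ ^ ((1 : ℝ) / ℓ)

/-- The dual basis `B^× = B (BᵀB)⁻¹` of the first `ℓ` vectors (extended by `0`). -/
def dualFam (B : ℕ → Euc m) (ℓ : ℕ) : ℕ → Euc m := fun i =>
  if h : i < ℓ then ∑ j : Fin ℓ, ((gram B ℓ)⁻¹ j ⟨i, h⟩) • B j else 0

/-- The reversed dual basis `B^{-s}`. -/
def revDual (B : ℕ → Euc m) (ℓ : ℕ) : ℕ → Euc m := fun i => dualFam B ℓ (ℓ - 1 - i)

/-- `B` (of rank `ℓ`) is `δ`-DHSVP-reduced: its reversed dual basis is `δ`-HSVP-reduced. -/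
def DHSVPReduced (δ : ℝ) (B : ℕ → Euc m) (ℓ : ℕ) : Prop :=
  HSVPReduced δ (revDual B ℓ) ℓ

/-- `B = (b_1, …, b_{d+1})` is `δ`-twin-reduced: `B_{[1,d]}` is `δ`-HSVP-reduced and
`B_{[2,d+1]}` is `δ`-DHSVP-reduced. -/
def TwinReduced (δ : ℝ) (B : ℕ → Euc m) (d : ℕ) : Prop :=
  HSVPReduced δ (block B 0) d ∧ DHSVPReduced δ (block B 1) d

/-- Gram–Schmidt coefficient `μ_{i,j}` (0-based). -/
def mu (B : ℕ → Euc m) (i j : ℕ) : ℝ :=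
  (inner ℝ (B i) (gsoVec B j) : ℝ) / ‖gsoVec B j‖ ^ 2

/-- The first `ℓ` vectors are size-reduced. -/
def SizeReduced (B : ℕ → Euc m) (ℓ : ℕ) : Prop :=
  ∀ i j, j < i → i < ℓ → |mu B i j| ≤ 1 / 2

/-- The first `ℓ` vectors are `ε`-LLL-reduced. -/
def LLLReduced (ε : ℝ) (B : ℕ → Euc m) (ℓ : ℕ) : Prop :=
  SizeReduced B ℓ ∧
    ∀ i, 0 < i → i < ℓ →
      ‖gsoVec B (i - 1)‖ ^ 2 ≤ (1 + ε) * ‖mu B i (i - 1) • gsoVec B (i - 1) + gsoVec B i‖ ^ 2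

/-- `B` (of rank `ℓ`) is `δ`-DSVP-reduced: its reversed dual basis is `δ`-SVP-reduced
and `B` is `(1/3)`-LLL-reduced. -/
def DSVPReduced (δ : ℝ) (B : ℕ → Euc m) (ℓ : ℕ) : Prop :=
  SVPReduced δ (revDual B ℓ) ℓ ∧ LLLReduced (1 / 3) B ℓ

/-- `γ` is an admissible Hermite bound for rank `r`: every lattice generated by `r`
linearly independent vectors of a Euclidean space satisfies `λ₁² ≤ γ · vol^{2/r}`. -/
def IsHermiteBound (γ : ℝ) (r : ℕ) : Prop :=
  ∀ (m' : ℕ) (v : ℕ → Euc m'), LinearIndependent ℝ (fun i : Fin r => v i) →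
    lambda1 (latticeSpan v r) ^ 2 ≤ γ * volB v r ^ ((2 : ℝ) / r)

open Submodule Set
open scoped Matrix

section Projection

variable {𝕜 E : Type*} [RCLike 𝕜] [NormedAddCommGroup E] [InnerProductSpace 𝕜 E]

theorem Submodule.starProjection_orthogonal_sup_apply {W S : Submodule 𝕜 E}
    [W.HasOrthogonalProjection] [S.HasOrthogonalProjection] [(W ⊔ S).HasOrthogonalProjection]
    (hSW : S ≤ Wᗮ) (x : E) :
    (W ⊔ S)ᗮ.starProjection x = Sᗮ.starProjection (Wᗮ.starProjection x) := by
  set y := Wᗮ.starProjection x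
  have hy : y ∈ Wᗮ := starProjection_apply_mem _ x
  refine eq_starProjection_of_mem_orthogonal ?_ ?_
  · rw [← inf_orthogonal, starProjection_orthogonal_val]
    exact ⟨sub_mem hy (hSW (starProjection_apply_mem _ y)), sub_starProjection_mem_orthogonal y⟩
  · refine le_orthogonal_orthogonal _ ?_
    have hdecomp : x - Sᗮ.starProjection y = W.starProjection x + S.starProjection y := by
      simp only [y, starProjection_orthogonal_val]; abel
    rw [hdecomp]
    exact add_mem (mem_sup_left (starProjection_apply_mem _ x))
      (mem_sup_right (starProjection_apply_mem _ y))

theorem Submodule.span_image_starProjection_orthogonal_sup (K : Submodule 𝕜 E)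
    [K.HasOrthogonalProjection] (s : Set E) :
    span 𝕜 (Kᗮ.starProjection '' s) ⊔ K = span 𝕜 s ⊔ K := by
  refine le_antisymm (sup_le ?_ le_sup_right) (sup_le ?_ le_sup_right) <;> rw [span_le]
  · rintro _ ⟨x, hx, rfl⟩
    rw [starProjection_orthogonal_val]
    exact sub_mem (mem_sup_left (subset_span hx)) (mem_sup_right (starProjection_apply_mem _ x))
  · intro x hx
    rw [← sub_add_cancel x (K.starProjection x), ← starProjection_orthogonal_val]
    exact add_mem (mem_sup_left (subset_span ⟨x, hx, rfl⟩))
      (mem_sup_right (starProjection_apply_mem _ x))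

end Projection

theorem Matrix.gram_sum_smul {E n p : Type*} [NormedAddCommGroup E] [InnerProductSpace ℝ E]
    [Fintype p] (M : Matrix n p ℝ) (w : p → E) :
    Matrix.gram ℝ (fun i => ∑ j, M i j • w j) = M * Matrix.gram ℝ w * Mᵀ := by
  ext i k
  simp only [Matrix.gram_apply, sum_inner, inner_sum, real_inner_smul_left, real_inner_smul_right,
    Matrix.mul_apply, Matrix.transpose_apply, Finset.sum_mul]
  exact Finset.sum_congr rfl fun j _ => Finset.sum_congr rfl fun l _ => by ring

theorem projGS_apply (B : ℕ → Euc m) (s : ℕ) (x : Euc m) :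
    projGS B s x = (span ℝ (B '' Iio s))ᗮ.starProjection x := rfl

theorem projGS_zero (B : ℕ → Euc m) : projGS B 0 = id := by
  ext1 x
  simp [projGS_apply, starProjection_top]

theorem block_zero (B : ℕ → Euc m) : block B 0 = B := by
  ext1 t
  simp [block, projGS_zero]

theorem gsoVec_eq_gramSchmidt (B : ℕ → Euc m) : gsoVec B = InnerProductSpace.gramSchmidt ℝ B := by
  ext1 i
  set gs := InnerProductSpace.gramSchmidt ℝ B
  have hW : span ℝ (B '' Iio i) = span ℝ (gs '' Iio i) :=
    (InnerProductSpace.span_gramSchmidt_Iio ℝ B i).symm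
  refine eq_starProjection_of_mem_orthogonal ?_ (le_orthogonal_orthogonal _ ?_)
  · rw [hW]
    refine (isOrtho_span.mpr ?_).le (subset_span rfl : gs i ∈ span ℝ {gs i})
    rintro _ rfl _ ⟨j, hj, rfl⟩
    exact InnerProductSpace.gramSchmidt_orthogonal ℝ B (ne_of_lt hj).symm
  · rw [InnerProductSpace.gramSchmidt_def'' ℝ B i, add_sub_cancel_left, hW]
    exact sum_mem fun j hj => smul_mem _ _ (subset_span ⟨j, Finset.mem_Iio.mp hj, rfl⟩)

theorem inner_gsoVec_gsoVec_of_ne (B : ℕ → Euc m) {i j : ℕ} (hij : i ≠ j) :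
    inner ℝ (gsoVec B i) (gsoVec B j) = 0 := by
  rw [gsoVec_eq_gramSchmidt]
  exact InnerProductSpace.gramSchmidt_orthogonal ℝ B hij

theorem gsoVec_add_sum_mu_smul (B : ℕ → Euc m) (i : ℕ) :
    gsoVec B i + ∑ j ∈ Finset.range i, mu B i j • gsoVec B j = B i := by
  conv_rhs => rw [InnerProductSpace.gramSchmidt_def'' ℝ B i]
  simp [mu, gsoVec_eq_gramSchmidt, real_inner_comm, Nat.Iio_eq_range]

def muMatrix (B : ℕ → Euc m) (ℓ : ℕ) : Matrix (Fin ℓ) (Fin ℓ) ℝ :=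
  Matrix.of fun i j => if (j : ℕ) < i then mu B i j else if (j : ℕ) = i then 1 else 0

theorem det_muMatrix (B : ℕ → Euc m) (ℓ : ℕ) : (muMatrix B ℓ).det = 1 := by
  rw [Matrix.det_of_isLowerTriangular _ fun i j (hij : i < j) => ?_]
  · simp [muMatrix]
  · simp [muMatrix, not_lt_of_gt hij, Fin.val_ne_of_ne hij.ne']

theorem sum_muMatrix_smul_gsoVec (B : ℕ → Euc m) {ℓ : ℕ} (i : Fin ℓ) :
    ∑ j, muMatrix B ℓ i j • gsoVec B j = B i := by
  set c : ℕ → ℝ := fun j => if j < i then mu B i j else if j = i then 1 else 0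
  have hc : ∀ j ∈ Finset.range ℓ, j ∉ Finset.range (i + 1) → c j • gsoVec B j = 0 := by
    intro j _ hj
    simp only [Finset.mem_range] at hj
    simp [c, show ¬ j < i by omega, show j ≠ i by omega]
  calc ∑ j, muMatrix B ℓ i j • gsoVec B j
      = ∑ j ∈ Finset.range ℓ, c j • gsoVec B j :=
        Fin.sum_univ_eq_sum_range (fun j => c j • gsoVec B j) ℓ
    _ = ∑ j ∈ Finset.range (i + 1), c j • gsoVec B j :=
        (Finset.sum_subset (Finset.range_subset_range.mpr i.isLt) hc).symm
    _ = B i := by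
        rw [Finset.sum_range_succ, add_comm, ← gsoVec_add_sum_mu_smul B i]
        congr 1
        · simp [c]
        · refine Finset.sum_congr rfl fun j hj => ?_
          simp [c, Finset.mem_range.mp hj]

theorem gram_eq_muMatrix_mul_diagonal_mul_transpose (B : ℕ → Euc m) (ℓ : ℕ) :
    gram B ℓ = muMatrix B ℓ * Matrix.diagonal (fun i : Fin ℓ => ‖gsoVec B i‖ ^ 2) *
      (muMatrix B ℓ)ᵀ := by
  have hdiag : Matrix.gram ℝ (fun i : Fin ℓ => gsoVec B i) =
      Matrix.diagonal (fun i : Fin ℓ => ‖gsoVec B i‖ ^ 2) := by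
    ext i j
    rcases eq_or_ne i j with rfl | hij
    · simp [Matrix.gram_apply]
    · simp [Matrix.gram_apply, hij, inner_gsoVec_gsoVec_of_ne B (Fin.val_ne_of_ne hij)]
  rw [← hdiag, ← Matrix.gram_sum_smul]
  simp only [sum_muMatrix_smul_gsoVec]
  rfl

theorem volB_eq_prod_norm_gsoVec (B : ℕ → Euc m) (ℓ : ℕ) :
    volB B ℓ = ∏ i ∈ Finset.range ℓ, ‖gsoVec B i‖ := by
  rw [volB, gram_eq_muMatrix_mul_diagonal_mul_transpose, Matrix.det_mul, Matrix.det_mul,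
    Matrix.det_transpose, det_muMatrix, Matrix.det_diagonal, one_mul, mul_one, Finset.prod_pow,
    Real.sqrt_sq (Finset.prod_nonneg fun _ _ => norm_nonneg _)]
  exact Fin.prod_univ_eq_prod_range (fun i => ‖gsoVec B i‖) ℓ

theorem image_block_Iio (B : ℕ → Euc m) (d i : ℕ) :
    block B d '' Iio i = projGS B d '' (B '' Ico d (d + i)) := by
  ext x
  simp only [block, mem_image, mem_Iio, mem_Ico]
  constructor
  · rintro ⟨j, hj, rfl⟩
    exact ⟨B (d + j), ⟨d + j, by omega, rfl⟩, rfl⟩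
  · rintro ⟨_, ⟨t, ht, rfl⟩, rfl⟩
    exact ⟨t - d, by omega, by rw [Nat.add_sub_cancel' ht.1]⟩

theorem gsoVec_block (B : ℕ → Euc m) (d i : ℕ) : gsoVec (block B d) i = gsoVec B (d + i) := by
  set W := span ℝ (B '' Iio d)
  have hSW : span ℝ (block B d '' Iio i) ≤ Wᗮ := span_le.mpr <| by
    rintro _ ⟨j, -, rfl⟩
    exact starProjection_apply_mem _ _
  have hWS : W ⊔ span ℝ (block B d '' Iio i) = span ℝ (B '' Iio (d + i)) := by
    rw [sup_comm, image_block_Iio]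
    refine (span_image_starProjection_orthogonal_sup W _).trans ?_
    rw [← span_union, ← image_union, union_comm, Iio_union_Ico_eq_Iio (Nat.le_add_right d i)]
  simp only [gsoVec, projGS_apply, ← hWS, starProjection_orthogonal_sup_apply hSW]
  rfl

theorem volB_add (B : ℕ → Euc m) (d k : ℕ) :
    volB B (d + k) = volB B d * volB (block B d) k := by
  simp only [volB_eq_prod_norm_gsoVec, Finset.prod_range_add, gsoVec_block]

theorem volB_nonneg (B : ℕ → Euc m) (ℓ : ℕ) : 0 ≤ volB B ℓ := Real.sqrt_nonneg _

theorem HSVPReduced.pow_le {δ : ℝ} {B : ℕ → Euc m} {ℓ : ℕ} (h : HSVPReduced δ B ℓ) :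
    ‖B 0‖ ^ ℓ ≤ δ ^ ℓ * volB B ℓ := by
  rcases eq_or_ne ℓ 0 with rfl | hℓ
  · simp [volB_eq_prod_norm_gsoVec]
  calc ‖B 0‖ ^ ℓ ≤ (δ * volB B ℓ ^ ((1 : ℝ) / ℓ)) ^ ℓ := pow_le_pow_left₀ (norm_nonneg _) h ℓ
    _ = δ ^ ℓ * volB B ℓ := by
      rw [mul_pow, one_div, Real.rpow_inv_natCast_pow (volB_nonneg B ℓ) hℓ]

theorem hsvpReduced_of_pow_le {δ : ℝ} {B : ℕ → Euc m} {ℓ : ℕ} (hδ : 0 ≤ δ) (hℓ : ℓ ≠ 0)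
    (h : ‖B 0‖ ^ ℓ ≤ δ ^ ℓ * volB B ℓ) : HSVPReduced δ B ℓ := by
  refine le_of_pow_le_pow_left₀ hℓ (by have := volB_nonneg B ℓ; positivity) ?_
  rwa [mul_pow, one_div, Real.rpow_inv_natCast_pow (volB_nonneg B ℓ) hℓ]

theorem pow_add_le_of_gluing {η a x P Q : ℝ} {d k : ℕ} (hη : 0 ≤ η) (ha : 0 ≤ a)
    (h₁ : a ^ d ≤ (η ^ (d - 1)) ^ d * P) (h₂ : x ^ k ≤ (η ^ (k - 1)) ^ k * Q)
    (h₃ : a ≤ η ^ (2 * d) * x) :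
    a ^ (d + k) ≤ (η ^ (d + k - 1)) ^ (d + k) * (P * Q) := by
  have hk : a ^ k ≤ (η ^ (2 * d)) ^ k * ((η ^ (k - 1)) ^ k * Q) :=
    calc a ^ k ≤ (η ^ (2 * d) * x) ^ k := pow_le_pow_left₀ ha h₃ k
      _ = (η ^ (2 * d)) ^ k * x ^ k := mul_pow _ _ _
      _ ≤ _ := mul_le_mul_of_nonneg_left h₂ (by positivity)
  have hexp : (η ^ (d - 1)) ^ d * (η ^ (2 * d)) ^ k * (η ^ (k - 1)) ^ k =
      (η ^ (d + k - 1)) ^ (d + k) := by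
    rcases d with _ | d <;> rcases k with _ | k <;> simp
    ring
  calc a ^ (d + k) = a ^ d * a ^ k := pow_add a d k
    _ ≤ ((η ^ (d - 1)) ^ d * P) * ((η ^ (2 * d)) ^ k * ((η ^ (k - 1)) ^ k * Q)) :=
      mul_le_mul h₁ hk (by positivity) ((pow_nonneg ha d).trans h₁)
    _ = (η ^ (d + k - 1)) ^ (d + k) * (P * Q) := by rw [← hexp]; ring

theorem gluing_hsvp_general {m n d : ℕ} (hdn : d < n) {η : ℝ} (hη : 1 ≤ η)
    (B : ℕ → Euc m)
    (hblock1 : HSVPReduced (η ^ (d - 1)) (block B 0) d)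
    (hblock2 : HSVPReduced (η ^ (n - d - 1)) (block B d) (n - d))
    (hfirst : ‖B 0‖ ≤ η ^ (2 * d) * ‖gsoVec B d‖) :
    ‖B 0‖ ≤ η ^ (n - 1) * volB B n ^ ((1 : ℝ) / n) := by
  obtain ⟨k, rfl⟩ : ∃ k, n = d + k := ⟨n - d, by omega⟩
  have hη0 : 0 ≤ η := zero_le_one.trans hη
  rw [block_zero] at hblock1
  rw [Nat.add_sub_cancel_left] at hblock2
  refine hsvpReduced_of_pow_le (pow_nonneg hη0 _) (by omega) ?_
  rw [volB_add]
  exact pow_add_le_of_gluing hη0 (norm_nonneg _) hblock1.pow_le hblock2.pow_le hfirst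

/-- gluing lemma, HSVP part. -/
theorem gluing_hsvp {m n d : ℕ} (hd1 : 1 ≤ d) (hdn : d < n) {η : ℝ} (hη : 1 ≤ η)
    (B : ℕ → Euc m) (hB : LinearIndependent ℝ (fun i : Fin n => B i))
    (hblock1 : HSVPReduced (η ^ (d - 1)) (block B 0) d)
    (hblock2 : HSVPReduced (η ^ (n - d - 1)) (block B d) (n - d))
    (hfirst : ‖B 0‖ ≤ η ^ (2 * d) * ‖gsoVec B d‖) :
    ‖B 0‖ ≤ η ^ (n - 1) * volB B n ^ ((1 : ℝ) / n) :=
  gluing_hsvp_general hdn hη B hblock1 hblock2 hfirst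

end
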